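/- If f_Σ and f_{Σ'} lie in the same G_χ-orbit on V for segmentations Σ and Σ' of Ω, then Σ and Σ' have the same χ-flavored multisegment. -/

import Mathlib

open Matrix

noncomputable section

/-- The indexing set `Ω = {(i,j) : 1 ≤ i ≤ m, 1 ≤ j ≤ v_i}` for the standard basis vectors of
`⊕ ℂ^{v_i}`; levels are indexed by `Fin (m'+1)` (so `m = m'+1`) and `d` is the dimension
vector (with `d (Fin.last m') = n`). -/
abbrev QOmega (m' : ℕ) (d : Fin (m' + 1) → ℕ) := Σ i : Fin (m' + 1), Fin (d i)

/-- A point of `V = ⊕_{i=1}^{m-1} Hom(ℂ^{v_i}, ℂ^{v_{i+1}})`, as a family of matrices. -/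
abbrev QRep (m' : ℕ) (d : Fin (m' + 1) → ℕ) :=
  ∀ i : Fin m', Matrix (Fin (d i.succ)) (Fin (d i.castSucc)) ℂ

/-- An element of `GL_{v_1} × ⋯ × GL_{v_{m-1}} × GL_n`. -/
abbrev QGroup (m' : ℕ) (d : Fin (m' + 1) → ℕ) := ∀ i : Fin (m' + 1), GL (Fin (d i)) ℂ

/-- The base-change action of the group on the space of quiver representations. -/
def qAct {m' : ℕ} {d : Fin (m' + 1) → ℕ} (g : QGroup m' d) (f : QRep m' d) : QRep m' d :=
  fun i => ((g i.succ : Matrix (Fin (d i.succ)) (Fin (d i.succ)) ℂ)) * f i *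
    (((g i.castSucc)⁻¹ : GL (Fin (d i.castSucc)) ℂ) : Matrix _ _ ℂ)

/-- Membership in the parabolic `P_χ ⊆ GL_n`: the entries `g_{kl}` with `χ_k > χ_l` vanish. -/
def InParabolic {N : ℕ} (χ : Fin N → ℤ) (A : Matrix (Fin N) (Fin N) ℂ) : Prop :=
  ∀ k l : Fin N, χ l < χ k → A k l = 0

/-- The set of levels occurring in a subset `S ⊆ Ω`. -/
def levelsOf {m' : ℕ} {d : Fin (m' + 1) → ℕ} (S : Set (QOmega m' d)) : Set (Fin (m' + 1)) :=
  {i | ∃ j : Fin (d i), (⟨i, j⟩ : QOmega m' d) ∈ S}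

/-- A subsegment of `Ω`: a set of the form `{(k,j_k),(k+1,j_{k+1}),…,(ℓ,j_ℓ)}`, i.e. a
nonempty subset with at most one element at each level whose set of levels is an interval. -/
def IsSubsegment {m' : ℕ} {d : Fin (m' + 1) → ℕ} (S : Set (QOmega m' d)) : Prop :=
  S.Nonempty ∧
  (∀ (i : Fin (m' + 1)) (j j' : Fin (d i)),
    (⟨i, j⟩ : QOmega m' d) ∈ S → (⟨i, j'⟩ : QOmega m' d) ∈ S → j = j') ∧
  (∀ i₁ i₂ i₃ : Fin (m' + 1), i₁ ∈ levelsOf S → i₂ ∈ levelsOf S →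
    i₁ ≤ i₃ → i₃ ≤ i₂ → i₃ ∈ levelsOf S)

/-- A segmentation of `Ω`: a partition of `Ω` into subsegments. -/
def IsSegmentation {m' : ℕ} {d : Fin (m' + 1) → ℕ} (P : Set (Set (QOmega m' d))) : Prop :=
  (∀ S ∈ P, IsSubsegment S) ∧ ∀ x : QOmega m' d, ∃! S, S ∈ P ∧ x ∈ S

open Classical in
/-- The quiver representation `f_Σ` attached to a segmentation: `f(b_{i,j}) = b_{i+1,j'}` if
`(i,j)` and `(i+1,j')` lie in a common subsegment, and `f(b_{i,j}) = 0` otherwise. -/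
def segRep {m' : ℕ} {d : Fin (m' + 1) → ℕ} (P : Set (Set (QOmega m' d))) : QRep m' d :=
  fun i => Matrix.of fun j' j =>
    if ∃ S ∈ P, (⟨i.castSucc, j⟩ : QOmega m' d) ∈ S ∧ (⟨i.succ, j'⟩ : QOmega m' d) ∈ S
    then (1 : ℂ) else 0

/-- Two segmentations define the same `χ`-flavored multisegment: there is a bijection between
their subsegments matching the underlying segments, and matching subsegments ending at the top
level only when the corresponding flavors (entries of `χ`) agree. -/
def SameMultisegment {m' : ℕ} {d : Fin (m' + 1) → ℕ} (χ : Fin (d (Fin.last m')) → ℤ)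
    (P P' : Set (Set (QOmega m' d))) : Prop :=
  ∃ φ : P ≃ P', ∀ S : P,
    levelsOf (S : Set (QOmega m' d)) = levelsOf ((φ S : Set (QOmega m' d))) ∧
    ∀ j j' : Fin (d (Fin.last m')),
      (⟨Fin.last m', j⟩ : QOmega m' d) ∈ (S : Set (QOmega m' d)) →
      (⟨Fin.last m', j'⟩ : QOmega m' d) ∈ ((φ S : Set (QOmega m' d))) → χ j = χ j'

/-- `f` and `f'` lie in the same `G_χ = P_χ × G_0` orbit. -/
def SameOrbit {m' : ℕ} {d : Fin (m' + 1) → ℕ} (χ : Fin (d (Fin.last m')) → ℤ)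
    (f f' : QRep m' d) : Prop :=
  ∃ g : QGroup m' d,
    InParabolic χ ((g (Fin.last m') : Matrix (Fin (d (Fin.last m'))) (Fin (d (Fin.last m'))) ℂ)) ∧
    qAct g f = f'

/-! The composite `f_{l-1} ∘ ⋯ ∘ f_k` of `f_Σ` is the 0/1 matrix linking the basis vectors of
levels `k` and `l` that lie in a common subsegment, so its rank is the number of subsegments
through levels `k` and `l`; keeping only the rows `j` with `χ_j ≥ v` counts those which moreover
end at level `m` with flavor at least `v`. Both ranks are constant on `G_χ`-orbits: the composites
get conjugated by the group, and a matrix of `P_χ` and its inverse are block triangular for `χ`,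
so multiplying by them on the left does not change the rank of the rows with `χ ≥ v`. These ranks
are the numbers of subsegments whose type (set of levels, flavor) lies above a given type, and
Möbius inversion over the finitely many types recovers the number of subsegments of each type. -/

section UpperCounts

variable {α α' β : Type*} [PartialOrder β]

theorem card_le_eq_card_eq_add_card_lt [Finite α] (f : α → β) (t : β) :
    Nat.card {x // t ≤ f x} = Nat.card {x // f x = t} + Nat.card {x // t < f x} := by
  classical
  have := Fintype.ofFinite α
  simp only [Nat.card_eq_fintype_card]
  rw [← Fintype.card_subtype_or_disjoint]
  · exact Fintype.card_congr (Equiv.subtypeEquivRight fun x => by rw [le_iff_eq_or_lt, eq_comm])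
  · exact fun p hp hq x hx => (hp x hx ▸ hq x hx).false |>.elim

open Classical in
theorem card_lt_eq_sum_card_eq [Finite α] [Fintype β] (f : α → β) (t : β) :
    Nat.card {x // t < f x} = ∑ s ∈ Finset.univ.filter (t < ·), Nat.card {x // f x = s} := by
  have := Fintype.ofFinite α
  simp only [Nat.card_eq_fintype_card, Fintype.card_subtype]
  rw [Finset.card_eq_sum_card_fiberwise (f := f) (t := Finset.univ.filter (t < ·))
    fun x hx => by simpa using hx]
  refine Finset.sum_congr rfl fun s hs => congrArg Finset.card ?_
  ext x
  simp only [Finset.mem_filter, Finset.mem_univ, true_and] at hs ⊢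
  exact ⟨And.right, fun h => ⟨h ▸ hs, h⟩⟩

theorem card_fiber_eq_of_card_upper_eq [Finite β] [Finite α] [Finite α'] (f : α → β)
    (g : α' → β) (h : ∀ t, Nat.card {x // t ≤ f x} = Nat.card {y // t ≤ g y}) (t : β) :
    Nat.card {x // f x = t} = Nat.card {y // g y = t} := by
  classical
  have := Fintype.ofFinite β
  induction t using WellFoundedGT.induction with
  | _ t ih =>
    have hlt : Nat.card {x // t < f x} = Nat.card {y // t < g y} := by
      rw [card_lt_eq_sum_card_eq, card_lt_eq_sum_card_eq]
      exact Finset.sum_congr rfl fun s hs => ih s (Finset.mem_filter.mp hs).2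
    have hle := h t
    rw [card_le_eq_card_eq_add_card_lt, card_le_eq_card_eq_add_card_lt] at hle
    omega

theorem exists_equiv_of_card_upper_eq [Finite α] [Finite α'] (f : α → β) (g : α' → β)
    (h : ∀ t ∈ Set.range f ∪ Set.range g,
      Nat.card {x // t ≤ f x} = Nat.card {y // t ≤ g y}) :
    ∃ e : α ≃ α', ∀ x, g (e x) = f x := by
  let f₀ : α → ↥(Set.range f ∪ Set.range g) := fun x => ⟨f x, .inl ⟨x, rfl⟩⟩
  let g₀ : α' → ↥(Set.range f ∪ Set.range g) := fun y => ⟨g y, .inr ⟨y, rfl⟩⟩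
  have := (Set.finite_range f |>.union (Set.finite_range g)).to_subtype
  have hfiber := card_fiber_eq_of_card_upper_eq f₀ g₀ fun t => h t t.2
  let e t := (Finite.card_eq.mp (hfiber t)).some
  exact ⟨Equiv.ofFiberEquiv e, fun x => congrArg Subtype.val (Equiv.ofFiberEquiv_map e x)⟩

end UpperCounts

section RelMatrix

open Classical in
noncomputable def relMatrix {ι κ : Type*} (K : Type*) [Zero K] [One K] (r : ι → κ → Prop) :
    Matrix ι κ K :=
  of fun i j => if r i j then 1 else 0

variable {K ι κ μ : Type*}

theorem relMatrix_eq_one [DecidableEq ι] [Zero K] [One K] :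
    relMatrix K (· = · : ι → ι → Prop) = 1 := by
  ext i j
  simp [relMatrix, one_apply]

theorem transpose_relMatrix [Zero K] [One K] (r : ι → κ → Prop) :
    (relMatrix K r)ᵀ = relMatrix K fun j i => r i j := rfl

theorem diagonal_mul_relMatrix [DecidableEq ι] [Fintype ι] [NonAssocSemiring K] (p : ι → Prop)
    [DecidablePred p] (r : ι → κ → Prop) :
    diagonal (fun i => if p i then (1 : K) else 0) * relMatrix K r =
      relMatrix K fun i j => p i ∧ r i j := by
  ext i j
  by_cases hp : p i <;> by_cases hr : r i j <;> simp [relMatrix, hp, hr]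

theorem relMatrix_mul_relMatrix [Fintype κ] [NonAssocSemiring K] (r : ι → κ → Prop)
    (s : κ → μ → Prop) (h : ∀ i k j j', r i j → s j k → r i j' → s j' k → j = j') :
    relMatrix K r * relMatrix K s = relMatrix K fun i k => ∃ j, r i j ∧ s j k := by
  ext i k
  simp only [relMatrix, mul_apply, of_apply, mul_ite, mul_one, mul_zero]
  split_ifs with hex
  · obtain ⟨j, hr, hs⟩ := hex
    rw [Finset.sum_eq_single j]
    · simp [hr, hs]
    · intro j' _ hj'
      by_cases hr' : r i j' <;> by_cases hs' : s j' k <;> simp [hr', hs']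
      exact (hj' (h i k j' j hr' hs' hr hs)).elim
    · simp
  · refine Finset.sum_eq_zero fun j _ => ?_
    by_cases hr : r i j <;> by_cases hs : s j k <;> simp [hr, hs]
    exact (hex ⟨j, hr, hs⟩).elim

/-- `Mᵀ * M` is the diagonal projection onto the support of the columns, and `M * (Mᵀ * M) = M`,
so `M` and that projection have the same rank. -/
theorem rank_relMatrix [Field K] [Fintype ι] [Fintype κ] (r : ι → κ → Prop)
    (h₁ : ∀ i j j', r i j → r i j' → j = j') (h₂ : ∀ i i' j, r i j → r i' j → i = i') :
    (relMatrix K r).rank = Nat.card {j // ∃ i, r i j} := by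
  classical
  set M := relMatrix K r
  have hMtM : Mᵀ * M = diagonal fun j => if ∃ i, r i j then (1 : K) else 0 := by
    rw [transpose_relMatrix,
      relMatrix_mul_relMatrix _ _ fun j j' i i' hi _ hi' _ => h₂ i i' j hi hi',
      ← mul_one (diagonal _), ← relMatrix_eq_one, diagonal_mul_relMatrix]
    congr
    ext j j'
    exact ⟨fun ⟨i, hi, hi'⟩ => ⟨⟨i, hi⟩, h₁ i j j' hi hi'⟩, fun ⟨⟨i, hi⟩, hj⟩ => ⟨i, hi, hj ▸ hi⟩⟩
  have hMMtM : M * (Mᵀ * M) = M := by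
    rw [hMtM, ← mul_one (diagonal _), ← relMatrix_eq_one, diagonal_mul_relMatrix,
      relMatrix_mul_relMatrix _ _ fun _ _ j j' _ hj _ hj' => hj.2.trans hj'.2.symm]
    congr
    ext i j
    exact ⟨fun ⟨j', hj', _, hjj'⟩ => hjj' ▸ hj', fun hj => ⟨j, hj, ⟨i, hj⟩, rfl⟩⟩
  have hrank : M.rank = (Mᵀ * M).rank := by
    refine le_antisymm ?_ (rank_mul_le_right Mᵀ M)
    calc M.rank = (M * (Mᵀ * M)).rank := by rw [hMMtM]
      _ ≤ (Mᵀ * M).rank := rank_mul_le_right M _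
  rw [hrank, hMtM, rank_diagonal, Nat.card_eq_fintype_card]
  exact Fintype.card_congr (Equiv.subtypeEquivRight fun j => by simp)

end RelMatrix

section UpperProj

def upperProj {ι α : Type*} [DecidableEq ι] [LinearOrder α] (K : Type*) [Zero K] [One K]
    (b : ι → α) (v : α) : Matrix ι ι K :=
  diagonal fun i => if v ≤ b i then 1 else 0

variable {K ι κ α : Type*} [Field K] [Fintype ι] [DecidableEq ι] [Fintype κ] [LinearOrder α]
  {b : ι → α}

theorem upperProj_mul_eq_of_blockTriangular {A : Matrix ι ι K} (hA : A.BlockTriangular b)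
    (v : α) : upperProj K b v * A = upperProj K b v * A * upperProj K b v := by
  ext i j
  by_cases hi : v ≤ b i <;> by_cases hj : v ≤ b j <;> simp [upperProj, hi, hj]
  exact hA (lt_of_lt_of_le (not_le.mp hj) hi)

theorem rank_upperProj_mul_le_of_blockTriangular {A : Matrix ι ι K} (hA : A.BlockTriangular b)
    (v : α) (M : Matrix ι κ K) :
    (upperProj K b v * A * M).rank ≤ (upperProj K b v * M).rank := by
  rw [upperProj_mul_eq_of_blockTriangular hA, Matrix.mul_assoc _ (upperProj K b v)]
  exact rank_mul_le_right _ _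

theorem rank_upperProj_mul_units_mul {g : GL ι K} (hg : (g : Matrix ι ι K).BlockTriangular b)
    (v : α) (M : Matrix ι κ K) :
    (upperProj K b v * (g : Matrix ι ι K) * M).rank = (upperProj K b v * M).rank := by
  have hg' : ((g⁻¹ : GL ι K) : Matrix ι ι K).BlockTriangular b := by
    have := g.invertible
    rw [coe_units_inv]
    exact blockTriangular_inv_of_blockTriangular hg
  refine le_antisymm (rank_upperProj_mul_le_of_blockTriangular hg v M) ?_
  calc (upperProj K b v * M).rank
      = (upperProj K b v * ((g⁻¹ : GL ι K) : Matrix ι ι K) * ((g : Matrix ι ι K) * M)).rank := by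
        rw [Matrix.mul_assoc _ _ (_ * M), ← Matrix.mul_assoc _ _ M, Units.inv_mul, Matrix.one_mul]
    _ ≤ (upperProj K b v * ((g : Matrix ι ι K) * M)).rank :=
        rank_upperProj_mul_le_of_blockTriangular hg' v _
    _ = (upperProj K b v * (g : Matrix ι ι K) * M).rank := by rw [Matrix.mul_assoc]

end UpperProj

section Segmentation

variable {m' : ℕ} {d : Fin (m' + 1) → ℕ}

theorem IsSubsegment.levelsOf_nonempty {S : Set (QOmega m' d)} (hS : IsSubsegment S) :
    (levelsOf S).Nonempty :=
  let ⟨x, hx⟩ := hS.1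
  ⟨x.1, x.2, hx⟩

theorem IsSubsegment.Icc_subset_levelsOf {S : Set (QOmega m' d)} (hS : IsSubsegment S)
    {k l : Fin (m' + 1)} (hk : k ∈ levelsOf S) (hl : l ∈ levelsOf S) :
    Set.Icc k l ⊆ levelsOf S :=
  fun _ hi => hS.2.2 k l _ hk hl hi.1 hi.2

def SameBlock (P : Set (Set (QOmega m' d))) (x y : QOmega m' d) : Prop :=
  ∃ S ∈ P, x ∈ S ∧ y ∈ S

/-- For `k ≤ l`, the matrix of `f_{l-1} ∘ ⋯ ∘ f_k : ℂ^{v_k} → ℂ^{v_l}` where `f = f_Σ`. -/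
noncomputable def segMat (P : Set (Set (QOmega m' d))) (k l : Fin (m' + 1)) :
    Matrix (Fin (d l)) (Fin (d k)) ℂ :=
  relMatrix ℂ fun j' j => SameBlock P ⟨k, j⟩ ⟨l, j'⟩

theorem segRep_eq_segMat (P : Set (Set (QOmega m' d))) (i : Fin m') :
    segRep P i = segMat P i.castSucc i.succ := by
  ext j' j
  simp only [segRep, segMat, relMatrix, SameBlock, of_apply]
  congr

namespace IsSegmentation

variable {P : Set (Set (QOmega m' d))}

noncomputable def block (hP : IsSegmentation P) (x : QOmega m' d) : Set (QOmega m' d) :=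
  (hP.2 x).exists.choose

theorem block_mem (hP : IsSegmentation P) (x : QOmega m' d) : hP.block x ∈ P :=
  (hP.2 x).exists.choose_spec.1

theorem mem_block (hP : IsSegmentation P) (x : QOmega m' d) : x ∈ hP.block x :=
  (hP.2 x).exists.choose_spec.2

theorem block_eq (hP : IsSegmentation P) {S : Set (QOmega m' d)} (hS : S ∈ P)
    {x : QOmega m' d} (hx : x ∈ S) : hP.block x = S :=
  (hP.2 x).unique ⟨hP.block_mem x, hP.mem_block x⟩ ⟨hS, hx⟩

theorem sameBlock_iff (hP : IsSegmentation P) {x y : QOmega m' d} :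
    SameBlock P x y ↔ hP.block x = hP.block y :=
  ⟨fun ⟨_, hS, hx, hy⟩ => (hP.block_eq hS hx).trans (hP.block_eq hS hy).symm,
    fun h => ⟨hP.block x, hP.block_mem x, hP.mem_block x, h ▸ hP.mem_block y⟩⟩

theorem sameBlock_iff_mem_block (hP : IsSegmentation P) {x y : QOmega m' d} :
    SameBlock P x y ↔ y ∈ hP.block x :=
  ⟨fun h => hP.sameBlock_iff.mp h ▸ hP.mem_block y,
    fun h => ⟨hP.block x, hP.block_mem x, hP.mem_block x, h⟩⟩

theorem eq_of_block_eq (hP : IsSegmentation P) {i : Fin (m' + 1)} {j j' : Fin (d i)}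
    (h : hP.block ⟨i, j⟩ = hP.block ⟨i, j'⟩) : j = j' :=
  (hP.1 _ (hP.block_mem _)).2.1 i j j' (hP.mem_block _) (h ▸ hP.mem_block _)

theorem segMat_self (hP : IsSegmentation P) (k : Fin (m' + 1)) : segMat P k k = 1 := by
  rw [segMat, ← relMatrix_eq_one]
  congr
  ext j' j
  rw [hP.sameBlock_iff]
  exact ⟨fun h => (hP.eq_of_block_eq h).symm, fun h => h ▸ rfl⟩

theorem segMat_mul_segMat (hP : IsSegmentation P) {k c l : Fin (m' + 1)} (hkc : k ≤ c)
    (hcl : c ≤ l) : segMat P c l * segMat P k c = segMat P k l := by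
  rw [segMat, segMat, relMatrix_mul_relMatrix]
  · congr
    ext j'' j
    constructor
    · rintro ⟨j', hcl, hkc⟩
      exact hP.sameBlock_iff.mpr ((hP.sameBlock_iff.mp hkc).trans (hP.sameBlock_iff.mp hcl))
    · rintro ⟨S, hS, hk, hl⟩
      obtain ⟨j', hc⟩ := (hP.1 S hS).Icc_subset_levelsOf ⟨j, hk⟩ ⟨j'', hl⟩ ⟨hkc, hcl⟩
      exact ⟨j', ⟨S, hS, hc, hl⟩, ⟨S, hS, hk, hc⟩⟩
  · intro j'' j j' j₂ _ hj' _ hj₂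
    exact hP.eq_of_block_eq ((hP.sameBlock_iff.mp hj').symm.trans (hP.sameBlock_iff.mp hj₂))

theorem card_subtype_block (hP : IsSegmentation P) (k : Fin (m' + 1))
    (Q : Set (QOmega m' d) → Prop) :
    Nat.card {j : Fin (d k) // Q (hP.block ⟨k, j⟩)} =
      Nat.card {S : P // k ∈ levelsOf (S : Set (QOmega m' d)) ∧ Q S} := by
  refine Nat.card_eq_of_bijective
    (fun j => ⟨⟨hP.block ⟨k, j⟩, hP.block_mem _⟩, ⟨j, hP.mem_block _⟩, j.2⟩) ⟨?_, ?_⟩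
  · intro j j' h
    exact Subtype.ext (hP.eq_of_block_eq (congrArg (fun S => (S.1 : Set (QOmega m' d))) h))
  · rintro ⟨⟨S, hS⟩, ⟨j, hj⟩, hQ⟩
    have hb := hP.block_eq hS hj
    exact ⟨⟨j, hb ▸ hQ⟩, by ext1; ext1; exact hb⟩

theorem rank_diagonal_mul_segMat (hP : IsSegmentation P) (k l : Fin (m' + 1))
    (p : Fin (d l) → Prop) [DecidablePred p] :
    (diagonal (fun j => if p j then (1 : ℂ) else 0) * segMat P k l).rank =
      Nat.card {S : P // k ∈ levelsOf (S : Set (QOmega m' d)) ∧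
        ∃ j, (⟨l, j⟩ : QOmega m' d) ∈ (S : Set (QOmega m' d)) ∧ p j} := by
  have huniq {j₁ j₂ : Fin (d k)} {j'₁ j'₂ : Fin (d l)}
      (h₁ : SameBlock P ⟨k, j₁⟩ ⟨l, j'₁⟩) (h₂ : SameBlock P ⟨k, j₂⟩ ⟨l, j'₂⟩) :
      j₁ = j₂ ↔ j'₁ = j'₂ := by
    rw [hP.sameBlock_iff] at h₁ h₂
    constructor
    · rintro rfl; exact hP.eq_of_block_eq (h₁.symm.trans h₂)
    · rintro rfl; exact hP.eq_of_block_eq (h₁.trans h₂.symm)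
  rw [segMat, diagonal_mul_relMatrix, rank_relMatrix _
    (fun _ _ _ h₁ h₂ => (huniq h₁.2 h₂.2).mpr rfl) (fun _ _ _ h₁ h₂ => (huniq h₁.2 h₂.2).mp rfl),
    ← hP.card_subtype_block k fun S => ∃ j, (⟨l, j⟩ : QOmega m' d) ∈ S ∧ p j]
  exact Nat.card_congr (Equiv.subtypeEquivRight fun j => by
    simp only [hP.sameBlock_iff_mem_block]; exact exists_congr fun _ => and_comm)

theorem rank_segMat (hP : IsSegmentation P) (k l : Fin (m' + 1)) :
    (segMat P k l).rank = Nat.card {S : P //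
      k ∈ levelsOf (S : Set (QOmega m' d)) ∧ l ∈ levelsOf (S : Set (QOmega m' d))} := by
  simpa [levelsOf] using hP.rank_diagonal_mul_segMat k l fun _ => True

end IsSegmentation

open Classical in
noncomputable def topFlavor (χ : Fin (d (Fin.last m')) → ℤ) (S : Set (QOmega m' d)) :
    WithBot ℤ :=
  (Finset.univ.filter fun j => (⟨Fin.last m', j⟩ : QOmega m' d) ∈ S).sup fun j => (χ j : WithBot ℤ)

theorem coe_le_topFlavor_iff {χ : Fin (d (Fin.last m')) → ℤ} {S : Set (QOmega m' d)} (v : ℤ) :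
    (v : WithBot ℤ) ≤ topFlavor χ S ↔ ∃ j, (⟨Fin.last m', j⟩ : QOmega m' d) ∈ S ∧ v ≤ χ j := by
  rw [topFlavor, Finset.le_sup_iff (WithBot.bot_lt_coe v)]
  simp

theorem IsSubsegment.topFlavor_eq {χ : Fin (d (Fin.last m')) → ℤ} {S : Set (QOmega m' d)}
    (hS : IsSubsegment S) {j : Fin (d (Fin.last m'))}
    (hj : (⟨Fin.last m', j⟩ : QOmega m' d) ∈ S) : topFlavor χ S = χ j := by
  classical
  have htop : (Finset.univ.filter fun j => (⟨Fin.last m', j⟩ : QOmega m' d) ∈ S) = {j} :=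
    Finset.eq_singleton_iff_unique_mem.mpr
      ⟨by simpa using hj, fun j' hj' => hS.2.1 _ _ _ (by simpa using hj') hj⟩
  rw [topFlavor, htop, Finset.sup_singleton]

def segType (χ : Fin (d (Fin.last m')) → ℤ) (S : Set (QOmega m' d)) :
    Set (Fin (m' + 1)) × WithBot ℤ :=
  (levelsOf S, topFlavor χ S)

namespace IsSegmentation

variable {P : Set (Set (QOmega m' d))} {χ : Fin (d (Fin.last m')) → ℤ}

theorem card_bot_le_segType (hP : IsSegmentation P) {T : Set (Fin (m' + 1))}
    {k l : Fin (m' + 1)} (hk : k ∈ T) (hl : l ∈ T) (hT : T ⊆ Set.Icc k l) :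
    Nat.card {S : P // (T, ⊥) ≤ segType χ S} = (segMat P k l).rank := by
  rw [hP.rank_segMat]
  refine Nat.card_congr (Equiv.subtypeEquivRight fun S => ?_)
  simp only [segType, Prod.mk_le_mk, bot_le, and_true]
  exact ⟨fun h => ⟨h hk, h hl⟩, fun h => hT.trans ((hP.1 S S.2).Icc_subset_levelsOf h.1 h.2)⟩

theorem card_coe_le_segType (hP : IsSegmentation P) {T : Set (Fin (m' + 1))}
    {k : Fin (m' + 1)} (hk : k ∈ T) (hT : ∀ i ∈ T, k ≤ i) (v : ℤ) :
    Nat.card {S : P // (T, (v : WithBot ℤ)) ≤ segType χ S} =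
      (upperProj ℂ χ v * segMat P k (Fin.last m')).rank := by
  rw [upperProj, hP.rank_diagonal_mul_segMat]
  refine Nat.card_congr (Equiv.subtypeEquivRight fun S => ?_)
  simp only [segType, Prod.mk_le_mk, coe_le_topFlavor_iff]
  exact ⟨fun h => ⟨h.1 hk, h.2⟩, fun ⟨hkS, j, hj, hv⟩ =>
    ⟨fun i hi => (hP.1 S S.2).Icc_subset_levelsOf hkS ⟨j, hj⟩ ⟨hT i hi, Fin.le_last i⟩, j, hj, hv⟩⟩

end IsSegmentation

section Orbit

/-- The products in the definition of `qAct` are elaborated through the `CStarMatrix` instance,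
which blocks rewriting with ordinary matrix lemmas; this restates them as matrix products. -/
theorem qAct_apply (g : QGroup m' d) (f : QRep m' d) (i : Fin m') :
    qAct g f i = (g i.succ : Matrix (Fin (d i.succ)) (Fin (d i.succ)) ℂ) *
      (f i : Matrix (Fin (d i.succ)) (Fin (d i.castSucc)) ℂ) *
      (((g i.castSucc)⁻¹ : GL (Fin (d i.castSucc)) ℂ) :
        Matrix (Fin (d i.castSucc)) (Fin (d i.castSucc)) ℂ) := rfl

variable {P P' : Set (Set (QOmega m' d))} {g : QGroup m' d}

theorem segMat_eq_of_qAct (hP : IsSegmentation P) (hP' : IsSegmentation P')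
    (hg : qAct g (segRep P) = segRep P') {k l : Fin (m' + 1)} (hkl : k ≤ l) :
    segMat P' k l =
      (g l : Matrix (Fin (d l)) (Fin (d l)) ℂ) * segMat P k l *
        (((g k)⁻¹ : GL (Fin (d k)) ℂ) : Matrix (Fin (d k)) (Fin (d k)) ℂ) := by
  induction l using Fin.induction with
  | zero =>
    obtain rfl := Fin.le_zero_iff.mp hkl
    rw [hP.segMat_self, hP'.segMat_self, Matrix.mul_one, Units.mul_inv]
  | succ i ih =>
    rcases hkl.lt_or_eq with hlt | rfl
    · have hk : k ≤ i.castSucc := Fin.le_castSucc_iff.mpr hlt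
      rw [← hP.segMat_mul_segMat hk (Fin.castSucc_le_succ i),
        ← hP'.segMat_mul_segMat hk (Fin.castSucc_le_succ i), ih hk,
        ← segRep_eq_segMat P' i, ← hg, qAct_apply, segRep_eq_segMat]
      simp only [Matrix.mul_assoc]
      congr 2
      rw [← Matrix.mul_assoc, Units.inv_mul, Matrix.one_mul]
    · rw [hP.segMat_self, hP'.segMat_self, Matrix.mul_one, Units.mul_inv]

theorem rank_segMat_eq_of_qAct (hP : IsSegmentation P) (hP' : IsSegmentation P')
    (hg : qAct g (segRep P) = segRep P') {k l : Fin (m' + 1)} (hkl : k ≤ l) :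
    (segMat P' k l).rank = (segMat P k l).rank := by
  rw [segMat_eq_of_qAct hP hP' hg hkl, rank_mul_eq_left_of_isUnit_det _ _ (isUnits_det_units _),
    rank_mul_eq_right_of_isUnit_det _ _ (isUnits_det_units _)]

theorem rank_upperProj_mul_segMat_eq_of_qAct (hP : IsSegmentation P) (hP' : IsSegmentation P')
    (hg : qAct g (segRep P) = segRep P') {χ : Fin (d (Fin.last m')) → ℤ}
    (hpar : InParabolic χ (g (Fin.last m') : Matrix _ _ ℂ)) (v : ℤ) (k : Fin (m' + 1)) :
    (upperProj ℂ χ v * segMat P' k (Fin.last m')).rank =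
      (upperProj ℂ χ v * segMat P k (Fin.last m')).rank := by
  rw [segMat_eq_of_qAct hP hP' hg (Fin.le_last k), ← Matrix.mul_assoc, ← Matrix.mul_assoc,
    rank_mul_eq_left_of_isUnit_det _ _ (isUnits_det_units _),
    rank_upperProj_mul_units_mul fun i j h => hpar i j h]

theorem card_le_segType_eq_of_sameOrbit {χ : Fin (d (Fin.last m')) → ℤ}
    (hP : IsSegmentation P) (hP' : IsSegmentation P')
    (horb : SameOrbit χ (segRep P) (segRep P')) {t : Set (Fin (m' + 1)) × WithBot ℤ}
    (ht : t.1.Nonempty) :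
    Nat.card {S : P // t ≤ segType χ S} = Nat.card {S : P' // t ≤ segType χ S} := by
  obtain ⟨g, hpar, hg⟩ := horb
  obtain ⟨T, c⟩ := t
  obtain ⟨k, hk, hkT⟩ : ∃ k ∈ T, ∀ i ∈ T, k ≤ i := Set.exists_min_image T id T.toFinite ht
  obtain ⟨l, hl, hlT⟩ : ∃ l ∈ T, ∀ i ∈ T, i ≤ l := Set.exists_max_image T id T.toFinite ht
  cases c with
  | bot =>
    have hT : T ⊆ Set.Icc k l := fun i hi => ⟨hkT i hi, hlT i hi⟩
    rw [hP.card_bot_le_segType hk hl hT, hP'.card_bot_le_segType hk hl hT,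
      ← rank_segMat_eq_of_qAct hP hP' hg (hkT l hl)]
  | coe v =>
    rw [hP.card_coe_le_segType hk hkT, hP'.card_coe_le_segType hk hkT,
      ← rank_upperProj_mul_segMat_eq_of_qAct hP hP' hg hpar]

end Orbit

end Segmentation

theorem sameOrbit_implies_sameMultisegment_general (m' : ℕ) (d : Fin (m' + 1) → ℕ)
    (χ : Fin (d (Fin.last m')) → ℤ)
    (P P' : Set (Set (QOmega m' d)))
    (hP : IsSegmentation P) (hP' : IsSegmentation P')
    (horb : SameOrbit χ (segRep P) (segRep P')) :
    SameMultisegment χ P P' := by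
  obtain ⟨e, he⟩ := exists_equiv_of_card_upper_eq (fun S : P => segType χ S)
    (fun S : P' => segType χ S) fun t ht => card_le_segType_eq_of_sameOrbit hP hP' horb <| by
      rcases ht with ⟨S, rfl⟩ | ⟨S, rfl⟩
      exacts [(hP.1 S S.2).levelsOf_nonempty, (hP'.1 S S.2).levelsOf_nonempty]
  refine ⟨e, fun S => ⟨(congrArg Prod.fst (he S)).symm, fun j j' hj hj' => ?_⟩⟩
  have hflavor := congrArg Prod.snd (he S)
  rw [segType, segType, (hP'.1 _ (e S).2).topFlavor_eq hj', (hP.1 _ S.2).topFlavor_eq hj]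
    at hflavor
  exact (WithBot.coe_inj.mp hflavor).symm

/-- If the points `f_Σ`, `f_{Σ'}` associated to two segmentations of `Ω` lie in the same
`G_χ`-orbit on `V`, then the segmentations have the same `χ`-flavored multisegment. -/
theorem sameOrbit_implies_sameMultisegment (m' : ℕ) (hm : 1 ≤ m') (d : Fin (m' + 1) → ℕ)
    (χ : Fin (d (Fin.last m')) → ℤ) (hχ : Monotone χ)
    (P P' : Set (Set (QOmega m' d)))
    (hP : IsSegmentation P) (hP' : IsSegmentation P')
    (horb : SameOrbit χ (segRep P) (segRep P')) :
    SameMultisegment χ P P' :=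
  sameOrbit_implies_sameMultisegment_general m' d χ P P' hP hP' horb

end
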